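/- Let A be a p×n complex matrix, W a nonzero n×p complex matrix, k = max{Ind(AW), Ind(WA)}, m a positive integer. Suppose X = A^{⊙_m,W} is the W-weighted m-weak core inverse. Then W·A·W·X is an idempotent p×p matrix (more precisely, WAWX is the projector onto range((WA)^k) along nullspace([(WA)^k]* (WA)^m P_{(WA)^m})). -/

import Mathlib

open Matrix

/-- `P` is the orthogonal projector onto the subspace `S`. -/
def IsOrthProjOnto {p : ℕ} (P : Matrix (Fin p) (Fin p) ℂ)
    (S : Submodule ℂ (Fin p → ℂ)) : Prop :=
  P * P = P ∧ Pᴴ = P ∧ LinearMap.range P.mulVecLin = S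

/-- `k` is the index of the square matrix `M`. -/
def MatIndex {p : ℕ} (M : Matrix (Fin p) (Fin p) ℂ) (k : ℕ) : Prop :=
  (M ^ k).rank = (M ^ (k + 1)).rank ∧
    ∀ j, (M ^ j).rank = (M ^ (j + 1)).rank → k ≤ j

/-!
Write `B = W * A` and `Y = W * Z`. Then `W * A * W * X = Y ^ m * B ^ m * P`, and `Y` is the core-EP
inverse of `B`: `B * Y = Pk` and `range Y ≤ range (B ^ k)`. Since `k` is at least the index of `B`,
`B` is injective on `R = range (B ^ k)` and maps it onto itself, so `Y * B` is the identity on `R`.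
Hence `B ^ m * Y ^ m = Pk`, `Y ^ m * Pk = Y ^ m` and `Y ^ m * B ^ m` fixes `R`; together with
`P * Y ^ m = Y ^ m` this gives idempotency and the range. For the kernel,
`ker (Y ^ m) = ker Pk = ker ((B ^ k)ᴴ)`, the last because `Pk` is the orthogonal projector onto `R`.
-/

namespace Matrix

section CommSemiring

variable {R : Type*} [CommSemiring R] {l m n : Type*} [Fintype m] [Fintype n]

theorem range_mulVecLin_mul (M : Matrix l m R) (N : Matrix m n R) :
    LinearMap.range (M * N).mulVecLin = (LinearMap.range N.mulVecLin).map M.mulVecLin := by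
  rw [mulVecLin_mul, LinearMap.range_comp]

theorem range_mulVecLin_mul_le (M : Matrix l m R) (N : Matrix m n R) :
    LinearMap.range (M * N).mulVecLin ≤ LinearMap.range M.mulVecLin := by
  rw [mulVecLin_mul]
  exact LinearMap.range_comp_le_range _ _

theorem ker_mulVecLin_mul (M : Matrix l m R) (N : Matrix m n R) :
    LinearMap.ker (M * N).mulVecLin = (LinearMap.ker M.mulVecLin).comap N.mulVecLin := by
  rw [mulVecLin_mul, LinearMap.ker_comp]

theorem exists_mul_eq_of_range_le [DecidableEq n] {M : Matrix l m R} {N : Matrix l n R}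
    (h : LinearMap.range N.mulVecLin ≤ LinearMap.range M.mulVecLin) :
    ∃ C : Matrix m n R, M * C = N := by
  choose c hc using fun j => h ⟨Pi.single j 1, rfl⟩
  refine ⟨of fun i j => c j i, ext fun i j => ?_⟩
  have hcol := congrFun (hc j) i
  simp only [mulVecLin_apply, mulVec_single_one] at hcol
  simpa [mul_apply, mulVec, dotProduct] using hcol

theorem mul_eq_self_of_range_le [Fintype l] [DecidableEq n] {Q : Matrix l l R} {N : Matrix l n R}
    (hQ : Q * Q = Q) (h : LinearMap.range N.mulVecLin ≤ LinearMap.range Q.mulVecLin) :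
    Q * N = N := by
  obtain ⟨C, rfl⟩ := exists_mul_eq_of_range_le h
  rw [← Matrix.mul_assoc, hQ]

theorem mul_mul_pow [DecidableEq m] [DecidableEq n] (U : Matrix m n R) (V : Matrix n m R) (j : ℕ) :
    U * (V * U) ^ j = (U * V) ^ j * U := by
  induction j with
  | zero => simp
  | succ j ih =>
    rw [pow_succ, pow_succ, ← Matrix.mul_assoc, ih]
    simp only [Matrix.mul_assoc]

theorem range_mulVecLin_mul_le_pow_of_range_le {o : Type*} [Fintype o] [DecidableEq m]
    [DecidableEq n] {U : Matrix m n R} {V : Matrix n m R} {Z : Matrix n o R} {k : ℕ}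
    (hZ : LinearMap.range Z.mulVecLin ≤ LinearMap.range ((V * U) ^ k).mulVecLin) :
    LinearMap.range (U * Z).mulVecLin ≤ LinearMap.range ((U * V) ^ k).mulVecLin :=
  calc LinearMap.range (U * Z).mulVecLin
      ≤ LinearMap.range (U * (V * U) ^ k).mulVecLin := by
        rw [range_mulVecLin_mul, range_mulVecLin_mul]
        exact Submodule.map_mono hZ
    _ ≤ _ := by rw [mul_mul_pow]; exact range_mulVecLin_mul_le _ _

theorem mul_mul_mul_eq_pow_mul_pow [DecidableEq m] [DecidableEq n] {U : Matrix m n R}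
    {V Z G : Matrix n m R} {j : ℕ} (hj : 0 < j)
    (hG : V * U * G = (Z * U) ^ j * (V * U) ^ (j - 1) * V) :
    U * V * U * G = (U * Z) ^ j * (U * V) ^ j := by
  obtain ⟨j, rfl⟩ := Nat.exists_eq_add_one_of_ne_zero hj.ne'
  rw [Nat.add_sub_cancel] at hG
  calc U * V * U * G = U * (Z * U) ^ (j + 1) * (V * U) ^ j * V := by
        rw [Matrix.mul_assoc (U * V), Matrix.mul_assoc U, ← Matrix.mul_assoc V, hG]
        simp only [Matrix.mul_assoc]
    _ = (U * Z) ^ (j + 1) * (U * (V * U) ^ j) * V := by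
        rw [mul_mul_pow]; simp only [Matrix.mul_assoc]
    _ = (U * Z) ^ (j + 1) * (U * V) ^ (j + 1) := by
        rw [mul_mul_pow, pow_succ (U * V)]; simp only [Matrix.mul_assoc]

theorem ker_mulVecLin_eq_ker_conjTranspose [StarRing R] [Fintype l] [DecidableEq l] [DecidableEq n]
    {P : Matrix l l R} {M : Matrix l n R} (hP : P * P = P) (hPH : Pᴴ = P)
    (hPM : LinearMap.range P.mulVecLin = LinearMap.range M.mulVecLin) :
    LinearMap.ker P.mulVecLin = LinearMap.ker Mᴴ.mulVecLin := by
  apply le_antisymm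
  · have hMP : Mᴴ * P = Mᴴ := by
      rw [← hPH, ← conjTranspose_mul, mul_eq_self_of_range_le hP hPM.ge]
    rw [← hMP, mulVecLin_mul]
    exact LinearMap.ker_le_ker_comp _ _
  · obtain ⟨C, hC⟩ := exists_mul_eq_of_range_le hPM.le
    have hCM : Cᴴ * Mᴴ = P := by rw [← conjTranspose_mul, hC, hPH]
    rw [← hCM, mulVecLin_mul]
    exact LinearMap.ker_le_ker_comp _ _

end CommSemiring

section Field

variable {K : Type*} [Field K] {n o : Type*} [Fintype n] [DecidableEq n] [Fintype o]
  (B : Matrix n n K)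

theorem range_mulVecLin_pow_antitone :
    Antitone fun j : ℕ => LinearMap.range (B ^ j).mulVecLin := by
  intro i j hij
  dsimp only
  rw [← Nat.add_sub_cancel' hij, pow_add]
  exact range_mulVecLin_mul_le _ _

theorem range_mulVecLin_pow_succ_eq_of_rank_eq {s : ℕ}
    (h : (B ^ s).rank = (B ^ (s + 1)).rank) :
    LinearMap.range (B ^ (s + 1)).mulVecLin = LinearMap.range (B ^ s).mulVecLin :=
  Submodule.eq_of_le_of_finrank_le (range_mulVecLin_pow_antitone B s.le_succ) h.le

theorem range_mulVecLin_pow_eq_of_le {s j : ℕ}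
    (hs : LinearMap.range (B ^ (s + 1)).mulVecLin = LinearMap.range (B ^ s).mulVecLin)
    (hj : s ≤ j) : LinearMap.range (B ^ j).mulVecLin = LinearMap.range (B ^ s).mulVecLin := by
  induction j, hj using Nat.le_induction with
  | base => rfl
  | succ j _ ih => rw [pow_succ', range_mulVecLin_mul, ih, ← range_mulVecLin_mul, ← pow_succ', hs]

theorem range_mulVecLin_pow_le_of_le {s k : ℕ}
    (hs : LinearMap.range (B ^ (s + 1)).mulVecLin = LinearMap.range (B ^ s).mulVecLin)
    (hsk : s ≤ k) (m : ℕ) :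
    LinearMap.range (B ^ k).mulVecLin ≤ LinearMap.range (B ^ m).mulVecLin := by
  rw [range_mulVecLin_pow_eq_of_le B hs hsk,
    ← range_mulVecLin_pow_eq_of_le B hs (hsk.trans (le_max_left k m))]
  exact range_mulVecLin_pow_antitone B (le_max_right k m)

theorem mulVecLin_injOn_range_pow {k : ℕ}
    (hk : LinearMap.range (B ^ (k + 1)).mulVecLin = LinearMap.range (B ^ k).mulVecLin) :
    Set.InjOn B.mulVecLin (LinearMap.range (B ^ k).mulVecLin) := by
  set S := LinearMap.range (B ^ k).mulVecLin
  have hrange : LinearMap.range (B.mulVecLin.domRestrict S) = S := by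
    rw [LinearMap.range_domRestrict, ← range_mulVecLin_mul, ← pow_succ', hk]
  have hker : LinearMap.ker (B.mulVecLin.domRestrict S) = ⊥ := by
    have hdim := LinearMap.finrank_range_add_finrank_ker (B.mulVecLin.domRestrict S)
    rw [hrange] at hdim
    exact Submodule.finrank_eq_zero.mp (by omega)
  intro u hu v hv huv
  exact congrArg Subtype.val
    (LinearMap.ker_eq_bot.mp hker (a₁ := ⟨u, hu⟩) (a₂ := ⟨v, hv⟩) huv)

theorem mul_left_cancel_of_range_le_pow [DecidableEq o] {k : ℕ}
    (hk : LinearMap.range (B ^ (k + 1)).mulVecLin = LinearMap.range (B ^ k).mulVecLin)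
    {D₁ D₂ : Matrix n o K}
    (hD₁ : LinearMap.range D₁.mulVecLin ≤ LinearMap.range (B ^ k).mulVecLin)
    (hD₂ : LinearMap.range D₂.mulVecLin ≤ LinearMap.range (B ^ k).mulVecLin)
    (h : B * D₁ = B * D₂) : D₁ = D₂ := by
  ext i j
  have hcol := mulVecLin_injOn_range_pow B hk (hD₁ ⟨Pi.single j 1, rfl⟩)
    (hD₂ ⟨Pi.single j 1, rfl⟩) (by simp only [mulVecLin_apply, mulVec_mulVec, h])
  simpa using congrFun hcol i

theorem range_mulVecLin_mul_le_pow {k : ℕ}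
    (hk : LinearMap.range (B ^ (k + 1)).mulVecLin = LinearMap.range (B ^ k).mulVecLin)
    {D : Matrix n o K} (hD : LinearMap.range D.mulVecLin ≤ LinearMap.range (B ^ k).mulVecLin) :
    LinearMap.range (B * D).mulVecLin ≤ LinearMap.range (B ^ k).mulVecLin := by
  rw [range_mulVecLin_mul, ← hk, pow_succ', range_mulVecLin_mul]
  exact Submodule.map_mono hD

variable {B} {Y E : Matrix n n K} {k : ℕ}

theorem mul_mul_eq_self_of_range_le_pow [DecidableEq o]
    (hk : LinearMap.range (B ^ (k + 1)).mulVecLin = LinearMap.range (B ^ k).mulVecLin)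
    (hBY : B * Y = E) (hE : E * E = E)
    (hEk : LinearMap.range E.mulVecLin = LinearMap.range (B ^ k).mulVecLin)
    (hY : LinearMap.range Y.mulVecLin ≤ LinearMap.range (B ^ k).mulVecLin)
    {D : Matrix n o K} (hD : LinearMap.range D.mulVecLin ≤ LinearMap.range (B ^ k).mulVecLin) :
    Y * (B * D) = D :=
  mul_left_cancel_of_range_le_pow B hk ((range_mulVecLin_mul_le _ _).trans hY) hD <| by
    rw [← Matrix.mul_assoc, hBY,
      mul_eq_self_of_range_le hE (hEk ▸ range_mulVecLin_mul_le_pow B hk hD)]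

theorem pow_mul_pow_mul_eq_self_of_range_le_pow [DecidableEq o]
    (hk : LinearMap.range (B ^ (k + 1)).mulVecLin = LinearMap.range (B ^ k).mulVecLin)
    (hBY : B * Y = E) (hE : E * E = E)
    (hEk : LinearMap.range E.mulVecLin = LinearMap.range (B ^ k).mulVecLin)
    (hY : LinearMap.range Y.mulVecLin ≤ LinearMap.range (B ^ k).mulVecLin) (j : ℕ)
    {D : Matrix n o K} (hD : LinearMap.range D.mulVecLin ≤ LinearMap.range (B ^ k).mulVecLin) :
    Y ^ j * (B ^ j * D) = D := by
  induction j generalizing D with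
  | zero => simp
  | succ j ih =>
    rw [pow_succ' Y, pow_succ B, Matrix.mul_assoc, Matrix.mul_assoc,
      ih (range_mulVecLin_mul_le_pow B hk hD),
      mul_mul_eq_self_of_range_le_pow hk hBY hE hEk hY hD]

theorem range_mulVecLin_pow_succ_le
    (hY : LinearMap.range Y.mulVecLin ≤ LinearMap.range (B ^ k).mulVecLin) (j : ℕ) :
    LinearMap.range (Y ^ (j + 1)).mulVecLin ≤ LinearMap.range (B ^ k).mulVecLin := by
  rw [pow_succ']
  exact (range_mulVecLin_mul_le _ _).trans hY

theorem pow_succ_mul_pow_succ_eq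
    (hBY : B * Y = E) (hE : E * E = E)
    (hEk : LinearMap.range E.mulVecLin = LinearMap.range (B ^ k).mulVecLin)
    (hY : LinearMap.range Y.mulVecLin ≤ LinearMap.range (B ^ k).mulVecLin) (j : ℕ) :
    B ^ (j + 1) * Y ^ (j + 1) = E := by
  induction j with
  | zero => simpa using hBY
  | succ j ih =>
    rw [pow_succ B, pow_succ' Y, Matrix.mul_assoc, ← Matrix.mul_assoc B, hBY,
      mul_eq_self_of_range_le hE (hEk ▸ range_mulVecLin_pow_succ_le hY j), ih]

theorem pow_succ_mul_eq_self
    (hk : LinearMap.range (B ^ (k + 1)).mulVecLin = LinearMap.range (B ^ k).mulVecLin)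
    (hBY : B * Y = E) (hE : E * E = E)
    (hEk : LinearMap.range E.mulVecLin = LinearMap.range (B ^ k).mulVecLin)
    (hY : LinearMap.range Y.mulVecLin ≤ LinearMap.range (B ^ k).mulVecLin) (j : ℕ) :
    Y ^ (j + 1) * E = Y ^ (j + 1) := by
  rw [pow_succ, Matrix.mul_assoc, ← hBY, mul_mul_eq_self_of_range_le_pow hk hBY hE hEk hY hY]

theorem ker_mulVecLin_pow_succ_eq
    (hk : LinearMap.range (B ^ (k + 1)).mulVecLin = LinearMap.range (B ^ k).mulVecLin)
    (hBY : B * Y = E) (hE : E * E = E)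
    (hEk : LinearMap.range E.mulVecLin = LinearMap.range (B ^ k).mulVecLin)
    (hY : LinearMap.range Y.mulVecLin ≤ LinearMap.range (B ^ k).mulVecLin) (j : ℕ) :
    LinearMap.ker (Y ^ (j + 1)).mulVecLin = LinearMap.ker E.mulVecLin := by
  apply le_antisymm
  · rw [← pow_succ_mul_pow_succ_eq hBY hE hEk hY j, mulVecLin_mul]
    exact LinearMap.ker_le_ker_comp _ _
  · conv_rhs => rw [← pow_succ_mul_eq_self hk hBY hE hEk hY j, mulVecLin_mul]
    exact LinearMap.ker_le_ker_comp _ _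

variable {P : Matrix n n K} {m : ℕ}

theorem pow_mul_pow_mul_mul_self
    (hk : LinearMap.range (B ^ (k + 1)).mulVecLin = LinearMap.range (B ^ k).mulVecLin)
    (hBY : B * Y = E) (hE : E * E = E)
    (hEk : LinearMap.range E.mulVecLin = LinearMap.range (B ^ k).mulVecLin)
    (hY : LinearMap.range Y.mulVecLin ≤ LinearMap.range (B ^ k).mulVecLin) (hP : P * P = P)
    (hkP : LinearMap.range (B ^ k).mulVecLin ≤ LinearMap.range P.mulVecLin) (hm : 0 < m) :
    Y ^ m * B ^ m * P * (Y ^ m * B ^ m * P) = Y ^ m * B ^ m * P := by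
  obtain ⟨j, rfl⟩ := Nat.exists_eq_add_one_of_ne_zero hm.ne'
  have hPY : P * Y ^ (j + 1) = Y ^ (j + 1) :=
    mul_eq_self_of_range_le hP ((range_mulVecLin_pow_succ_le hY j).trans hkP)
  calc Y ^ (j + 1) * B ^ (j + 1) * P * (Y ^ (j + 1) * B ^ (j + 1) * P)
      = Y ^ (j + 1) * (B ^ (j + 1) * (P * Y ^ (j + 1))) * (B ^ (j + 1) * P) := by
        simp only [Matrix.mul_assoc]
    _ = Y ^ (j + 1) * B ^ (j + 1) * P := by
        rw [hPY, pow_succ_mul_pow_succ_eq hBY hE hEk hY, pow_succ_mul_eq_self hk hBY hE hEk hY,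
          Matrix.mul_assoc]

theorem range_mulVecLin_pow_mul_pow_mul
    (hk : LinearMap.range (B ^ (k + 1)).mulVecLin = LinearMap.range (B ^ k).mulVecLin)
    (hBY : B * Y = E) (hE : E * E = E)
    (hEk : LinearMap.range E.mulVecLin = LinearMap.range (B ^ k).mulVecLin)
    (hY : LinearMap.range Y.mulVecLin ≤ LinearMap.range (B ^ k).mulVecLin) (hP : P * P = P)
    (hkP : LinearMap.range (B ^ k).mulVecLin ≤ LinearMap.range P.mulVecLin) (hm : 0 < m) :
    LinearMap.range (Y ^ m * B ^ m * P).mulVecLin = LinearMap.range (B ^ k).mulVecLin := by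
  obtain ⟨j, rfl⟩ := Nat.exists_eq_add_one_of_ne_zero hm.ne'
  apply le_antisymm
  · exact (range_mulVecLin_mul_le _ _).trans <|
      (range_mulVecLin_mul_le _ _).trans (range_mulVecLin_pow_succ_le hY j)
  · have hBk : Y ^ (j + 1) * B ^ (j + 1) * P * B ^ k = B ^ k := by
      rw [Matrix.mul_assoc, mul_eq_self_of_range_le hP hkP, Matrix.mul_assoc,
        pow_mul_pow_mul_eq_self_of_range_le_pow hk hBY hE hEk hY _ le_rfl]
    calc LinearMap.range (B ^ k).mulVecLin
        = LinearMap.range (Y ^ (j + 1) * B ^ (j + 1) * P * B ^ k).mulVecLin := by rw [hBk]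
      _ ≤ _ := range_mulVecLin_mul_le _ _

theorem ker_mulVecLin_pow_mul_pow_mul [StarRing K]
    (hk : LinearMap.range (B ^ (k + 1)).mulVecLin = LinearMap.range (B ^ k).mulVecLin)
    (hBY : B * Y = E) (hE : E * E = E) (hEH : Eᴴ = E)
    (hEk : LinearMap.range E.mulVecLin = LinearMap.range (B ^ k).mulVecLin)
    (hY : LinearMap.range Y.mulVecLin ≤ LinearMap.range (B ^ k).mulVecLin) (hm : 0 < m) :
    LinearMap.ker (Y ^ m * B ^ m * P).mulVecLin =
      LinearMap.ker ((B ^ k)ᴴ * B ^ m * P).mulVecLin := by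
  obtain ⟨j, rfl⟩ := Nat.exists_eq_add_one_of_ne_zero hm.ne'
  rw [Matrix.mul_assoc, Matrix.mul_assoc, ker_mulVecLin_mul, ker_mulVecLin_mul,
    ker_mulVecLin_pow_succ_eq hk hBY hE hEk hY, ker_mulVecLin_eq_ker_conjTranspose hE hEH hEk]

end Field

end Matrix

theorem stmt_13_general {p n : ℕ} (A : Matrix (Fin p) (Fin n) ℂ)
    (W : Matrix (Fin n) (Fin p) ℂ)
    (k₁ k₂ k m : ℕ) (hm : 0 < m)
    (hk₂ : MatIndex (W * A) k₂)
    (hk : k = max k₁ k₂)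
    -- `Pk` is the orthogonal projector onto range((WA)^k)
    (Pk : Matrix (Fin n) (Fin n) ℂ)
    (hPk : IsOrthProjOnto Pk (LinearMap.range ((W * A) ^ k).mulVecLin))
    -- `Z` is the W-weighted core-EP inverse of `A`
    (Z : Matrix (Fin p) (Fin n) ℂ)
    (hZ1 : W * A * W * Z = Pk)
    (hZ2 : LinearMap.range Z.mulVecLin ≤ LinearMap.range ((A * W) ^ k).mulVecLin)
    -- `G` is the W-weighted m-weak group inverse of `A`
    (G : Matrix (Fin p) (Fin n) ℂ)
    (hG1 : A * W * G = (Z * W) ^ m * (A * W) ^ (m - 1) * A)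
    -- `P` is the orthogonal projector onto range((WA)^m)
    (P : Matrix (Fin n) (Fin n) ℂ)
    (hP : IsOrthProjOnto P (LinearMap.range ((W * A) ^ m).mulVecLin))
    -- `X` is the W-weighted m-weak core inverse of `A`
    (X : Matrix (Fin p) (Fin n) ℂ) (hX : X = G * P) :
    (W * A * W * X) * (W * A * W * X) = W * A * W * X ∧
    LinearMap.range (W * A * W * X).mulVecLin =
      LinearMap.range ((W * A) ^ k).mulVecLin ∧
    LinearMap.ker (W * A * W * X).mulVecLin =
      LinearMap.ker (((W * A) ^ k)ᴴ * (W * A) ^ m * P).mulVecLin := by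
  obtain ⟨hPk, hPkH, hPkR⟩ := hPk
  obtain ⟨hP, -, hPR⟩ := hP
  have hk₂k : k₂ ≤ k := hk ▸ le_max_right k₁ k₂
  have hstab := range_mulVecLin_pow_succ_eq_of_rank_eq _ hk₂.1
  have hkk := (range_mulVecLin_pow_eq_of_le _ hstab (hk₂k.trans k.le_succ)).trans
    (range_mulVecLin_pow_eq_of_le _ hstab hk₂k).symm
  have hkP := hPR ▸ range_mulVecLin_pow_le_of_le _ hstab hk₂k m
  have hBY : W * A * (W * Z) = Pk := by rw [← Matrix.mul_assoc, hZ1]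
  have hY := range_mulVecLin_mul_le_pow_of_range_le hZ2
  have hWAWX : W * A * W * X = (W * Z) ^ m * (W * A) ^ m * P := by
    rw [hX, ← Matrix.mul_assoc, mul_mul_mul_eq_pow_mul_pow hm hG1]
  rw [hWAWX]
  exact ⟨pow_mul_pow_mul_mul_self hkk hBY hPk hPkR hY hP hkP hm,
    range_mulVecLin_pow_mul_pow_mul hkk hBY hPk hPkR hY hP hkP hm,
    ker_mulVecLin_pow_mul_pow_mul hkk hBY hPk hPkH hPkR hY hm⟩

theorem stmt_13 {p n : ℕ} (A : Matrix (Fin p) (Fin n) ℂ)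
    (W : Matrix (Fin n) (Fin p) ℂ) (hW : W ≠ 0)
    (k₁ k₂ k m : ℕ) (hm : 0 < m)
    (hk₁ : MatIndex (A * W) k₁) (hk₂ : MatIndex (W * A) k₂)
    (hk : k = max k₁ k₂)
    -- `Pk` is the orthogonal projector onto range((WA)^k)
    (Pk : Matrix (Fin n) (Fin n) ℂ)
    (hPk : IsOrthProjOnto Pk (LinearMap.range ((W * A) ^ k).mulVecLin))
    -- `Z` is the W-weighted core-EP inverse of `A`
    (Z : Matrix (Fin p) (Fin n) ℂ)
    (hZ1 : W * A * W * Z = Pk)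
    (hZ2 : LinearMap.range Z.mulVecLin ≤ LinearMap.range ((A * W) ^ k).mulVecLin)
    -- `G` is the W-weighted m-weak group inverse of `A`
    (G : Matrix (Fin p) (Fin n) ℂ)
    (hG1 : A * W * G = (Z * W) ^ m * (A * W) ^ (m - 1) * A)
    (hG2 : A * W * G * W * G = G)
    -- `P` is the orthogonal projector onto range((WA)^m)
    (P : Matrix (Fin n) (Fin n) ℂ)
    (hP : IsOrthProjOnto P (LinearMap.range ((W * A) ^ m).mulVecLin))
    -- `X` is the W-weighted m-weak core inverse of `A`
    (X : Matrix (Fin p) (Fin n) ℂ) (hX : X = G * P) :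
    (W * A * W * X) * (W * A * W * X) = W * A * W * X ∧
    LinearMap.range (W * A * W * X).mulVecLin =
      LinearMap.range ((W * A) ^ k).mulVecLin ∧
    LinearMap.ker (W * A * W * X).mulVecLin =
      LinearMap.ker (((W * A) ^ k)ᴴ * (W * A) ^ m * P).mulVecLin :=
  stmt_13_general A W k₁ k₂ k m hm hk₂ hk Pk hPk Z hZ1 hZ2 G hG1 P hP X hX
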